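/- arXiv:2101.05231 — 5 statements merged into one kernel-verified Lean document; each statement's English description precedes it below -/
import Mathlib

section
/- Let L be an m×n real matrix of rank r with compact SVD L = W Σ Vᵀ, satisfying μ₂-row incoherence: max_i ‖Vᵀeᵢ‖₂ ≤ √(μ₂ r/n). Let J ⊆ [n] with C = L(:,J) of rank r, and let C = W_C Σ_C V_Cᵀ be its compact SVD. Then for every index i, ‖V_Cᵀ eᵢ‖₂ ≤ κ(L) · (‖C†‖₂ / ‖L†‖₂) · √(μ₂ r / n), where κ(L) = σ_max(L)/σ_min(L) and † denotes Moore–Penrose pseudoinverse. -/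
/-!
`C† C` is the orthogonal projector `V_C V_Cᵀ` onto the row space of `C`, so
`‖V_Cᵀ eᵢ‖ = ‖V_C V_Cᵀ eᵢ‖ = ‖C† C eᵢ‖ = ‖C† L e_{g i}‖`. Since `L = L V Vᵀ`, the column
`L e_j = L V (Vᵀ e_j)` has norm at most `‖L‖ ‖Vᵀ e_j‖`, whence
`‖V_Cᵀ eᵢ‖ ≤ ‖C†‖ ‖L‖ √(μ₂ r / n)`. The factor `κ(L) ‖C†‖ / ‖L†‖` equals `‖L‖ ‖C†‖`, also
when `L† = 0` (where `x / 0 = 0`), because then `L = L L† L = 0`.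
-/

open Matrix BigOperators MeasureTheory

noncomputable def specNorm {m n : ℕ} (A : Matrix (Fin m) (Fin n) ℝ) : ℝ :=
  ‖LinearMap.toContinuousLinearMap (Matrix.toEuclideanLin A)‖

def IsMPInv {m n : ℕ} (A : Matrix (Fin m) (Fin n) ℝ) (B : Matrix (Fin n) (Fin m) ℝ) : Prop :=
  A * B * A = A ∧ B * A * B = B ∧ (A * B)ᵀ = A * B ∧ (B * A)ᵀ = B * A

noncomputable def rowNorm {m n : ℕ} (A : Matrix (Fin m) (Fin n) ℝ) (i : Fin m) : ℝ :=
  Real.sqrt (∑ j, (A i j) ^ 2)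

noncomputable def entryMax {m n : ℕ} (A : Matrix (Fin m) (Fin n) ℝ) : ℝ :=
  ⨆ i, ⨆ j, |A i j|

open scoped Matrix.Norms.L2Operator

namespace Matrix

theorem mul_mul_transpose_eq_self {R : Type*} [CommSemiring R] {m n r : Type*} [Fintype n]
    [Fintype r] [DecidableEq r] {L : Matrix m n R} {A : Matrix m r R} {V : Matrix n r R}
    (hV : Vᵀ * V = 1) (hL : L = A * Vᵀ) : L * (V * Vᵀ) = L := by
  rw [hL, Matrix.mul_assoc, ← Matrix.mul_assoc Vᵀ, hV, Matrix.one_mul]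

/-- `Cd * C` is the orthogonal projector onto the row space of `C`, i.e. onto the column space
of `Q`. -/
theorem mul_eq_mul_transpose_of_eq_mul_mul_transpose {R : Type*} [CommRing R] {m k r : Type*}
    [Fintype m] [Fintype k] [Fintype r] [DecidableEq r] {C : Matrix m k R} {Cd : Matrix k m R}
    {U : Matrix m r R} {D : Matrix r r R} {Q : Matrix k r R}
    (hCCd : C * Cd * C = C) (hsymm : (Cd * C)ᵀ = Cd * C)
    (hU : Uᵀ * U = 1) (hQ : Qᵀ * Q = 1) (hD : IsUnit D.det) (hC : C = U * D * Qᵀ) :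
    Cd * C = Q * Qᵀ := by
  have hUC : Uᵀ * C = D * Qᵀ := by
    rw [hC, ← Matrix.mul_assoc, ← Matrix.mul_assoc, hU, Matrix.one_mul]
  have hrow : Qᵀ * (Cd * C) = Qᵀ :=
    calc Qᵀ * (Cd * C) = D⁻¹ * (D * Qᵀ * (Cd * C)) := by
          rw [Matrix.mul_assoc, nonsing_inv_mul_cancel_left _ _ hD]
      _ = D⁻¹ * (Uᵀ * (C * Cd * C)) := by rw [← hUC]; simp only [Matrix.mul_assoc]
      _ = Qᵀ := by rw [hCCd, hUC, nonsing_inv_mul_cancel_left _ _ hD]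
  have hcol : Q * Qᵀ * (Cd * C) = Cd * C := by
    rw [← hsymm, Matrix.transpose_mul, hC]
    simp only [Matrix.transpose_mul, Matrix.transpose_transpose, Matrix.mul_assoc]
    rw [← Matrix.mul_assoc Qᵀ, hQ, Matrix.one_mul]
  rw [← hcol, Matrix.mul_assoc, hrow]

theorem transpose_mul_apply {R : Type*} [CommSemiring R] {m n k : Type*} [Fintype n]
    (A : Matrix m n R) (B : Matrix n k R) (i : k) : (A * B)ᵀ i = A *ᵥ Bᵀ i := by
  ext j
  simp [Matrix.mul_apply, Matrix.mulVec, dotProduct]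

section L2

variable {m n k r : Type*} [Fintype m] [Fintype n] [Fintype k] [Fintype r]

local notation "ℓ²" => WithLp.toLp 2

theorem norm_mulVec_eq_of_transpose_mul_self [DecidableEq r] {Q : Matrix n r ℝ}
    (hQ : Qᵀ * Q = 1) (x : r → ℝ) : ‖ℓ² (Q *ᵥ x)‖ = ‖ℓ² x‖ := by
  have hsq : ‖ℓ² (Q *ᵥ x)‖ ^ 2 = ‖ℓ² x‖ ^ 2 := by
    rw [← real_inner_self_eq_norm_sq, ← real_inner_self_eq_norm_sq,
      EuclideanSpace.inner_toLp_toLp, EuclideanSpace.inner_toLp_toLp, star_trivial, star_trivial,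
      dotProduct_mulVec, ← mulVec_transpose, mulVec_mulVec, hQ, one_mulVec]
  exact (pow_left_inj₀ (norm_nonneg _) (norm_nonneg _) two_ne_zero).1 hsq

theorem norm_mulVec_le [DecidableEq n] (A : Matrix m n ℝ) (x : n → ℝ) :
    ‖ℓ² (A *ᵥ x)‖ ≤ ‖A‖ * ‖ℓ² x‖ :=
  A.l2_opNorm_mulVec (ℓ² x)

theorem norm_col_le_of_mul_mul_transpose_eq_self [DecidableEq n] [DecidableEq r]
    {L : Matrix m n ℝ} {V : Matrix n r ℝ} (hV : Vᵀ * V = 1) (hLV : L * (V * Vᵀ) = L) (j : n) :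
    ‖ℓ² (Lᵀ j)‖ ≤ ‖L‖ * ‖ℓ² (V j)‖ := by
  have hcol : Lᵀ j = L *ᵥ (V *ᵥ V j) := by
    conv_lhs => rw [← hLV]
    rw [transpose_mul_apply, transpose_mul_apply, transpose_transpose]
  rw [hcol, ← norm_mulVec_eq_of_transpose_mul_self hV (V j)]
  exact norm_mulVec_le L _

theorem norm_row_le_of_mul_eq_mul_transpose [DecidableEq m] [DecidableEq r]
    {C : Matrix m k ℝ} {Cd : Matrix k m ℝ} {Q : Matrix k r ℝ} (hQ : Qᵀ * Q = 1)
    (hP : Cd * C = Q * Qᵀ) (i : k) :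
    ‖ℓ² (Q i)‖ ≤ ‖Cd‖ * ‖ℓ² (Cᵀ i)‖ := by
  have hrow : Q *ᵥ Q i = Cd *ᵥ Cᵀ i := by
    rw [← transpose_mul_apply, hP, transpose_mul_apply, transpose_transpose]
  rw [← norm_mulVec_eq_of_transpose_mul_self hQ, hrow]
  exact norm_mulVec_le Cd _

end L2

end Matrix

theorem specNorm_eq_l2_opNorm {m n : ℕ} (A : Matrix (Fin m) (Fin n) ℝ) : specNorm A = ‖A‖ := rfl

theorem rowNorm_eq_norm {m n : ℕ} (A : Matrix (Fin m) (Fin n) ℝ) (i : Fin m) :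
    rowNorm A i = ‖WithLp.toLp 2 (A i)‖ := by
  rw [EuclideanSpace.norm_eq, rowNorm]
  simp

theorem stmt1_general (m n r k : ℕ) (μ₂ : ℝ)
    (L : Matrix (Fin m) (Fin n) ℝ)
    (W : Matrix (Fin m) (Fin r) ℝ) (σ : Fin r → ℝ) (V : Matrix (Fin n) (Fin r) ℝ)
    (hV : Vᵀ * V = 1)
    (hL : L = W * Matrix.diagonal σ * Vᵀ)
    (hinc : ∀ i, rowNorm V i ≤ Real.sqrt (μ₂ * r / n))
    (g : Fin k → Fin n)
    (C : Matrix (Fin m) (Fin k) ℝ) (hC : C = L.submatrix id g)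
    (WC : Matrix (Fin m) (Fin r) ℝ) (σC : Fin r → ℝ) (VC : Matrix (Fin k) (Fin r) ℝ)
    (hWC : WCᵀ * WC = 1) (hVC : VCᵀ * VC = 1) (hσC : ∀ i, 0 < σC i)
    (hCSVD : C = WC * Matrix.diagonal σC * VCᵀ)
    (Cd : Matrix (Fin k) (Fin m) ℝ) (hCd : IsMPInv C Cd)
    (Ld : Matrix (Fin n) (Fin m) ℝ) (hLd : IsMPInv L Ld) :
    ∀ i, rowNorm VC i ≤
      (specNorm L * specNorm Ld) * (specNorm Cd / specNorm Ld) * Real.sqrt (μ₂ * r / n) := by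
  intro i
  simp only [specNorm_eq_l2_opNorm]
  have hσC_det : IsUnit (diagonal σC).det := by
    rw [det_diagonal]
    exact (Finset.prod_pos fun j _ => hσC j).ne'.isUnit
  have hproj : Cd * C = VC * VCᵀ :=
    mul_eq_mul_transpose_of_eq_mul_mul_transpose hCd.1 hCd.2.2.2 hWC hVC hσC_det hCSVD
  have hcol : Cᵀ i = Lᵀ (g i) := by rw [hC]; rfl
  have hrow : rowNorm VC i ≤ ‖Cd‖ * (‖L‖ * rowNorm V (g i)) := by
    rw [rowNorm_eq_norm, rowNorm_eq_norm]
    calc _ ≤ ‖Cd‖ * ‖WithLp.toLp 2 (Cᵀ i)‖ := norm_row_le_of_mul_eq_mul_transpose hVC hproj i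
      _ ≤ _ := by
        rw [hcol]
        gcongr
        exact norm_col_le_of_mul_mul_transpose_eq_self hV
          (mul_mul_transpose_eq_self hV hL) _
  have hL_zero : ‖Ld‖ = 0 → ‖L‖ = 0 := fun h => by
    rw [norm_eq_zero] at h ⊢
    rw [← hLd.1, h, Matrix.mul_zero, Matrix.zero_mul]
  calc rowNorm VC i ≤ ‖Cd‖ * (‖L‖ * Real.sqrt (μ₂ * r / n)) := by grw [hrow, hinc]
    _ = (‖L‖ * ‖Ld‖) * (‖Cd‖ / ‖Ld‖) * Real.sqrt (μ₂ * r / n) := by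
        rcases eq_or_ne ‖Ld‖ 0 with h | h
        · simp [h, hL_zero h]
        · field_simp

theorem stmt1 (m n r k : ℕ) (μ₂ : ℝ)
    (L : Matrix (Fin m) (Fin n) ℝ)
    (W : Matrix (Fin m) (Fin r) ℝ) (σ : Fin r → ℝ) (V : Matrix (Fin n) (Fin r) ℝ)
    (hW : Wᵀ * W = 1) (hV : Vᵀ * V = 1) (hσ : ∀ i, 0 < σ i)
    (hL : L = W * Matrix.diagonal σ * Vᵀ)
    (hrank : L.rank = r)
    (hinc : ∀ i, rowNorm V i ≤ Real.sqrt (μ₂ * r / n))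
    (g : Fin k → Fin n) (hg : Function.Injective g)
    (C : Matrix (Fin m) (Fin k) ℝ) (hC : C = L.submatrix id g)
    (hCrank : C.rank = r)
    (WC : Matrix (Fin m) (Fin r) ℝ) (σC : Fin r → ℝ) (VC : Matrix (Fin k) (Fin r) ℝ)
    (hWC : WCᵀ * WC = 1) (hVC : VCᵀ * VC = 1) (hσC : ∀ i, 0 < σC i)
    (hCSVD : C = WC * Matrix.diagonal σC * VCᵀ)
    (Cd : Matrix (Fin k) (Fin m) ℝ) (hCd : IsMPInv C Cd)
    (Ld : Matrix (Fin n) (Fin m) ℝ) (hLd : IsMPInv L Ld) :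
    ∀ i, rowNorm VC i ≤
      (specNorm L * specNorm Ld) * (specNorm Cd / specNorm Ld) * Real.sqrt (μ₂ * r / n) :=
  stmt1_general m n r k μ₂ L W σ V hV hL hinc g C hC WC σC VC hWC hVC hσC hCSVD Cd hCd Ld hLd
end

section
/- Let L ∈ ℝ^{m×n} have rank r, compact SVD L = W Σ Vᵀ, and satisfy μ₂-row incoherence: max_i ‖Vᵀeᵢ‖₂ ≤ √(μ₂ r/n). Then for any J ⊆ [n], the column submatrix C = L(:,J) satisfies ‖C‖₂ ≤ √(μ₂ r |J| / n) · ‖L‖₂. -/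
open Matrix BigOperators MeasureTheory

lemma specNorm_nonneg {m n : ℕ} (A : Matrix (Fin m) (Fin n) ℝ) : 0 ≤ specNorm A :=
  norm_nonneg _

lemma norm_apply_eq {m n : ℕ} (A : Matrix (Fin m) (Fin n) ℝ) (x : EuclideanSpace ℝ (Fin n)) :
    ‖(LinearMap.toContinuousLinearMap (Matrix.toEuclideanLin A)) x‖
      = Real.sqrt (∑ i, (A.mulVec (fun j => x j) i) ^ 2) := by
  rw [EuclideanSpace.norm_eq]
  congr 1
  apply Finset.sum_congr rfl
  intro i _
  rw [Real.norm_eq_abs, sq_abs]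
  rfl

lemma euclid_norm_eq {n : ℕ} (x : EuclideanSpace ℝ (Fin n)) :
    ‖x‖ = Real.sqrt (∑ j, (x j) ^ 2) := by
  rw [EuclideanSpace.norm_eq]
  congr 1
  exact Finset.sum_congr rfl fun j _ => by rw [Real.norm_eq_abs, sq_abs]

lemma specNorm_le_bound {m n : ℕ} (A : Matrix (Fin m) (Fin n) ℝ) (c : ℝ) (hc : 0 ≤ c)
    (h : ∀ x : Fin n → ℝ,
      Real.sqrt (∑ i, (A.mulVec x i) ^ 2) ≤ c * Real.sqrt (∑ j, (x j) ^ 2)) :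
    specNorm A ≤ c := by
  apply ContinuousLinearMap.opNorm_le_bound _ hc
  intro x
  rw [norm_apply_eq, euclid_norm_eq]
  exact h _

lemma mulVec_le_specNorm {m n : ℕ} (A : Matrix (Fin m) (Fin n) ℝ) (x : Fin n → ℝ) :
    Real.sqrt (∑ i, (A.mulVec x i) ^ 2) ≤ specNorm A * Real.sqrt (∑ j, (x j) ^ 2) := by
  have := ContinuousLinearMap.le_opNorm
    (LinearMap.toContinuousLinearMap (Matrix.toEuclideanLin A))
    ((WithLp.equiv 2 (Fin n → ℝ)).symm x)
  rwa [norm_apply_eq, euclid_norm_eq] at this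

lemma sum_sq_mulVec_orth {m r : ℕ} (W : Matrix (Fin m) (Fin r) ℝ) (hW : Wᵀ * W = 1)
    (y : Fin r → ℝ) : ∑ i, (W.mulVec y i) ^ 2 = ∑ t, (y t) ^ 2 := by
  have h : (W *ᵥ y) ⬝ᵥ (W *ᵥ y) = y ⬝ᵥ y := by
    rw [Matrix.dotProduct_mulVec, ← Matrix.mulVec_transpose, Matrix.mulVec_mulVec, hW,
      Matrix.one_mulVec]
  simpa [dotProduct, sq] using h

theorem stmt3 (m n r k : ℕ) (μ₂ : ℝ)
    (L : Matrix (Fin m) (Fin n) ℝ)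
    (W : Matrix (Fin m) (Fin r) ℝ) (σ : Fin r → ℝ) (V : Matrix (Fin n) (Fin r) ℝ)
    (hW : Wᵀ * W = 1) (hV : Vᵀ * V = 1) (hσ : ∀ i, 0 < σ i)
    (hL : L = W * Matrix.diagonal σ * Vᵀ)
    (hrank : L.rank = r)
    (hinc : ∀ i, rowNorm V i ≤ Real.sqrt (μ₂ * r / n))
    (g : Fin k → Fin n) (hg : Function.Injective g)
    (C : Matrix (Fin m) (Fin k) ℝ) (hC : C = L.submatrix id g) :
    specNorm C ≤ Real.sqrt (μ₂ * r * k / n) * specNorm L := by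
  set N := specNorm L with hN
  have hN0 : 0 ≤ N := specNorm_nonneg L
  by_cases hpos : 0 ≤ μ₂ * r / n
  · -- main case
    -- row bound
    have hrow : ∀ i : Fin n, ∑ t, (V i t) ^ 2 ≤ μ₂ * r / n := by
      intro i
      have h1 := hinc i
      rw [rowNorm] at h1
      have h2 : ∑ t, (V i t) ^ 2 = (Real.sqrt (∑ t, (V i t) ^ 2)) ^ 2 :=
        (Real.sq_sqrt (Finset.sum_nonneg fun t _ => sq_nonneg _)).symm
      rw [h2]
      calc (Real.sqrt (∑ t, (V i t) ^ 2)) ^ 2 ≤ (Real.sqrt (μ₂ * r / n)) ^ 2 :=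
            pow_le_pow_left₀ (Real.sqrt_nonneg _) h1 2
        _ = μ₂ * r / n := Real.sq_sqrt hpos
    -- singular values bounded by N
    have hsig : ∀ t : Fin r, σ t ≤ N := by
      intro t
      set v : Fin n → ℝ := fun i => V i t with hv
      have hLv : L *ᵥ v = fun i => σ t * W i t := by
        rw [hL, ← Matrix.mulVec_mulVec, ← Matrix.mulVec_mulVec]
        have h1 : Vᵀ *ᵥ v = fun s => (1 : Matrix (Fin r) (Fin r) ℝ) s t := by
          funext s
          rw [← hV]
          simp [Matrix.mulVec, dotProduct, Matrix.mul_apply, Matrix.transpose_apply, hv]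
        rw [h1]
        funext i
        simp [Matrix.mulVec, dotProduct, Matrix.diagonal, Matrix.one_apply, mul_ite,
          Finset.sum_ite_eq', mul_comm]
      have hWt : ∑ i, (W i t) ^ 2 = 1 := by
        have := congrFun (congrFun hW t) t
        simpa [Matrix.mul_apply, Matrix.one_apply, sq] using this
      have hVt : ∑ i, (v i) ^ 2 = 1 := by
        have := congrFun (congrFun hV t) t
        simpa [Matrix.mul_apply, Matrix.one_apply, sq, hv] using this
      have h3 := mulVec_le_specNorm L v
      rw [hLv, hVt] at h3
      have h4 : ∑ i, (σ t * W i t) ^ 2 = (σ t) ^ 2 := by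
        simp only [mul_pow, ← Finset.mul_sum, hWt, mul_one]
      rw [h4] at h3
      have h5 : Real.sqrt ((σ t) ^ 2) = σ t := Real.sqrt_sq (hσ t).le
      rw [h5, Real.sqrt_one, mul_one] at h3
      exact h3
    -- main operator norm bound
    have hμk : 0 ≤ μ₂ * r * k / n := by
      have : μ₂ * r * k / n = (μ₂ * r / n) * k := by ring
      rw [this]
      positivity
    apply specNorm_le_bound _ _ (mul_nonneg (Real.sqrt_nonneg _) hN0)
    intro x
    set u : Fin r → ℝ := fun t => ∑ j, V (g j) t * x j with hu
    have hCx : C *ᵥ x = W *ᵥ (fun t => σ t * u t) := by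
      funext i
      rw [hC, hL]
      simp only [Matrix.mulVec, dotProduct, Matrix.submatrix_apply, id_eq,
        Matrix.mul_apply, Matrix.transpose_apply, Matrix.diagonal, Matrix.of_apply, mul_ite,
        mul_zero, Finset.sum_ite_eq', Finset.mem_univ, if_true, hu, Finset.mul_sum,
        Finset.sum_mul]
      rw [Finset.sum_comm]
      apply Finset.sum_congr rfl
      intro t _
      apply Finset.sum_congr rfl
      intro j _
      ring
    have key : ∑ i, ((C *ᵥ x) i) ^ 2 ≤ N ^ 2 * (μ₂ * r * k / n) * ∑ j, (x j) ^ 2 := by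
      rw [hCx, sum_sq_mulVec_orth W hW]
      have step1 : ∑ t, (σ t * u t) ^ 2 ≤ N ^ 2 * ∑ t, (u t) ^ 2 := by
        rw [Finset.mul_sum]
        apply Finset.sum_le_sum
        intro t _
        rw [mul_pow]
        apply mul_le_mul_of_nonneg_right _ (sq_nonneg _)
        exact pow_le_pow_left₀ (hσ t).le (hsig t) 2
      have step2 : ∑ t, (u t) ^ 2 ≤ (μ₂ * r * k / n) * ∑ j, (x j) ^ 2 := by
        have cs : ∀ t : Fin r, (u t) ^ 2 ≤ (∑ j, (V (g j) t) ^ 2) * ∑ j, (x j) ^ 2 :=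
          fun t => Finset.sum_mul_sq_le_sq_mul_sq _ _ _
        calc ∑ t, (u t) ^ 2 ≤ ∑ t, (∑ j, (V (g j) t) ^ 2) * ∑ j, (x j) ^ 2 :=
              Finset.sum_le_sum fun t _ => cs t
          _ = (∑ j, ∑ t, (V (g j) t) ^ 2) * ∑ j, (x j) ^ 2 := by
              rw [← Finset.sum_mul, Finset.sum_comm]
          _ ≤ ((k : ℝ) * (μ₂ * r / n)) * ∑ j, (x j) ^ 2 := by
              apply mul_le_mul_of_nonneg_right _
                (Finset.sum_nonneg fun j _ => sq_nonneg _)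
              calc ∑ j : Fin k, ∑ t, (V (g j) t) ^ 2 ≤ ∑ _j : Fin k, (μ₂ * r / n) :=
                    Finset.sum_le_sum fun j _ => hrow (g j)
                _ = (k : ℝ) * (μ₂ * r / n) := by simp [Finset.sum_const, nsmul_eq_mul]
          _ = (μ₂ * r * k / n) * ∑ j, (x j) ^ 2 := by ring_nf
      calc ∑ t, (σ t * u t) ^ 2 ≤ N ^ 2 * ∑ t, (u t) ^ 2 := step1
        _ ≤ N ^ 2 * ((μ₂ * r * k / n) * ∑ j, (x j) ^ 2) :=
            mul_le_mul_of_nonneg_left step2 (sq_nonneg _)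
        _ = N ^ 2 * (μ₂ * r * k / n) * ∑ j, (x j) ^ 2 := by ring
    calc Real.sqrt (∑ i, ((C *ᵥ x) i) ^ 2)
        ≤ Real.sqrt (N ^ 2 * (μ₂ * r * k / n) * ∑ j, (x j) ^ 2) := Real.sqrt_le_sqrt key
      _ = Real.sqrt (μ₂ * r * k / n) * N * Real.sqrt (∑ j, (x j) ^ 2) := by
          rw [Real.sqrt_mul (by positivity), Real.sqrt_mul (sq_nonneg N), Real.sqrt_sq hN0]
          ring
      _ = Real.sqrt (μ₂ * r * k / n) * N * Real.sqrt (∑ j, (x j) ^ 2) := rfl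
  · -- degenerate case: μ₂ * r / n < 0, so V = 0
    have hneg : μ₂ * r / n ≤ 0 := le_of_not_ge hpos
    have hsqrt0 : Real.sqrt (μ₂ * r / n) = 0 := Real.sqrt_eq_zero_of_nonpos hneg
    have hV0 : ∀ i t, V i t = 0 := by
      intro i t
      have h1 := hinc i
      rw [rowNorm, hsqrt0] at h1
      have h2 : Real.sqrt (∑ t, (V i t) ^ 2) = 0 :=
        le_antisymm h1 (Real.sqrt_nonneg _)
      have h3 : ∑ t, (V i t) ^ 2 = 0 :=
        le_antisymm (Real.sqrt_eq_zero'.mp h2) (Finset.sum_nonneg fun t _ => sq_nonneg _)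
      have := (Finset.sum_eq_zero_iff_of_nonneg (fun t _ => sq_nonneg (V i t))).mp h3 t
        (Finset.mem_univ t)
      exact pow_eq_zero_iff (by norm_num) |>.mp this
    rcases Nat.eq_zero_or_pos r with hr | hr
    · -- r = 0 : L = 0
      subst hr
      have hL0 : L = 0 := by
        rw [hL]
        ext i j
        simp [Matrix.mul_apply]
      have hC0 : C = 0 := by rw [hC, hL0]; ext i j; simp
      have : specNorm C = 0 := by
        rw [hC0]
        simp only [specNorm, map_zero]
        exact norm_zero
      rw [this]
      positivity
    · -- r > 0 : contradiction with Vᵀ V = 1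
      exfalso
      have t0 : Fin r := ⟨0, hr⟩
      have := congrFun (congrFun hV t0) t0
      rw [Matrix.mul_apply] at this
      simp only [Matrix.transpose_apply, Matrix.one_apply_eq] at this
      have : (0 : ℝ) = 1 := by
        rw [← this]
        apply (Finset.sum_eq_zero _).symm
        intro i _
        rw [hV0 i t0, mul_zero]
      norm_num at this
end

section
/- Let A, B ∈ ℝ^{m×n} with rank(A) = rank(B). Then the Moore–Penrose pseudoinverses satisfy ‖A† − B†‖₂ ≤ 2 ‖A†‖₂ ‖B†‖₂ ‖A − B‖₂. -/
/-!
Write `P = A A†`, `Q = B B†`, `P' = A† A`, `Q' = B† B`; these are orthogonal projections, and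
`A† - B† = A† P (1 - Q) - A† (A - B) B† Q - (1 - P') Q' B† Q`.
The first two terms take values in the range of `P'`, the last one in its orthogonal complement.
Since `(1 - P) A = 0`, `(1 - P) Q = (1 - P) (B - A) B†` has norm at most `‖A - B‖ ‖B†‖`. As `P` and
`Q` have the same rank, `‖(1 - Q) P‖ ≤ ‖(1 - P) Q‖`, so `‖P (1 - Q)‖ ≤ ‖A - B‖ ‖B†‖` as well, and
dually `‖(1 - P') Q'‖ ≤ ‖A - B‖ ‖A†‖`. With `a = ‖(1 - Q) x‖`, `b = ‖Q x‖` and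
`K = ‖A†‖ ‖B†‖ ‖A - B‖`, Pythagoras gives
`‖(A† - B†) x‖² ≤ K² ((a + b)² + b²) ≤ 4 K² (a² + b²) = 4 K² ‖x‖²`.
-/

open Matrix

open ContinuousLinearMap Module
open scoped InnerProductSpace

section StarProjection

variable {𝕜 E : Type*} [RCLike 𝕜] [NormedAddCommGroup E] [InnerProductSpace 𝕜 E] [CompleteSpace E]
  {p q : E →L[𝕜] E}

namespace IsStarProjection

lemma apply_apply (hp : IsStarProjection p) (x : E) : p (p x) = p x :=
  congr($hp.isIdempotentElem.eq x)

lemma inner_apply_left (hp : IsStarProjection p) (x y : E) : ⟪p x, y⟫_𝕜 = ⟪x, p y⟫_𝕜 :=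
  hp.isSelfAdjoint.isSymmetric x y

lemma inner_apply_sub_apply (hp : IsStarProjection p) (x y : E) : ⟪p x, y - p y⟫_𝕜 = 0 := by
  rw [hp.inner_apply_left, map_sub, hp.apply_apply, sub_self, inner_zero_right]

lemma norm_apply_le (hp : IsStarProjection p) (x : E) : ‖p x‖ ≤ ‖x‖ :=
  (p.le_opNorm x).trans (mul_le_of_le_one_left (norm_nonneg x) (IsStarProjection.norm_le p hp))

lemma norm_sq_eq_add_norm_sq_sub (hp : IsStarProjection p) (x : E) :
    ‖x‖ ^ 2 = ‖p x‖ ^ 2 + ‖x - p x‖ ^ 2 := by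
  have := norm_add_sq_eq_norm_sq_add_norm_sq_of_inner_eq_zero _ _ (hp.inner_apply_sub_apply x x)
  rw [add_sub_cancel] at this
  rw [sq, sq, sq, this]

/- Cauchy–Schwarz gives `‖p u‖² = re ⟪q (p u), u⟫ ≤ ‖q (p u)‖ ‖u‖`, which together with
`‖u‖² = ‖p u‖² + ‖u - p u‖² ≤ ‖p u‖² + c² ‖u‖²` forces `‖q (p u)‖² ≥ (1 - c²) ‖p u‖²`. -/
lemma norm_apply_sub_apply_le (hp : IsStarProjection p) (hq : IsStarProjection q) {u : E}
    (hu : q u = u) {c : ℝ} (hc : 0 ≤ c) (h : ‖u - p u‖ ≤ c * ‖u‖) :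
    ‖p u - q (p u)‖ ≤ c * ‖p u‖ := by
  have hu_sq := hp.norm_sq_eq_add_norm_sq_sub u
  have hpu_sq := hq.norm_sq_eq_add_norm_sq_sub (p u)
  have hCS : ‖p u‖ ^ 2 ≤ ‖q (p u)‖ * ‖u‖ := by
    calc ‖p u‖ ^ 2 = RCLike.re ⟪q (p u), u⟫_𝕜 := by
          rw [hq.inner_apply_left, hu, ← hp.apply_apply u, hp.inner_apply_left, hp.apply_apply,
            inner_self_eq_norm_sq]
      _ ≤ ‖q (p u)‖ * ‖u‖ := re_inner_le_norm _ _
  have h2 : ‖u - p u‖ ^ 2 ≤ c ^ 2 * ‖u‖ ^ 2 := by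
    rw [← mul_pow]; exact pow_le_pow_left₀ (norm_nonneg _) h 2
  rw [← pow_le_pow_iff_left₀ (norm_nonneg _) (by positivity) two_ne_zero, mul_pow]
  rcases (norm_nonneg u).eq_or_lt with hu0 | hu0
  · rw [← hu0] at hCS; nlinarith [sq_nonneg ‖q (p u)‖, sq_nonneg c]
  · have hCS2 := pow_le_pow_left₀ (sq_nonneg _) hCS 2
    refine le_of_mul_le_mul_left ?_ (pow_pos hu0 2)
    nlinarith [sq_nonneg ‖p u‖]

variable [FiniteDimensional 𝕜 E]

lemma map_range_eq_range_of_norm_lt_one (hq : IsStarProjection q)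
    (hrank : finrank 𝕜 ((p : E →ₗ[𝕜] E).range) = finrank 𝕜 ((q : E →ₗ[𝕜] E).range))
    (hpq : ‖(1 - p) * q‖ < 1) :
    ((q : E →ₗ[𝕜] E).range).map (p : E →ₗ[𝕜] E) = (p : E →ₗ[𝕜] E).range := by
  have hinj : Function.Injective ((p : E →ₗ[𝕜] E).comp ((q : E →ₗ[𝕜] E).range).subtype) := by
    rw [← LinearMap.ker_eq_bot, LinearMap.ker_eq_bot']
    rintro ⟨_, y, rfl⟩ hy
    have hpy : p (q y) = 0 := hy
    have : ‖q y‖ ≤ ‖(1 - p) * q‖ * ‖q y‖ := by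
      simpa [hpy, hq.apply_apply] using ((1 - p) * q).le_opNorm (q y)
    ext1
    simpa using norm_eq_zero.mp (by nlinarith [norm_nonneg (q y)])
  refine Submodule.eq_of_le_of_finrank_eq (LinearMap.map_le_range) ?_
  rw [← Submodule.range_subtype (q : E →ₗ[𝕜] E).range, ← LinearMap.range_comp,
    LinearMap.finrank_range_of_inj hinj, hrank]

theorem norm_one_sub_mul_le_of_finrank_range_eq (hp : IsStarProjection p)
    (hq : IsStarProjection q)
    (hrank : finrank 𝕜 ((p : E →ₗ[𝕜] E).range) = finrank 𝕜 ((q : E →ₗ[𝕜] E).range)) :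
    ‖(1 - q) * p‖ ≤ ‖(1 - p) * q‖ := by
  rcases le_or_gt 1 ‖(1 - p) * q‖ with h1 | h1
  · exact (norm_mul_le _ _).trans
      ((mul_le_one₀ (norm_le _ hq.one_sub) (norm_nonneg _) (norm_le _ hp)).trans h1)
  refine opNorm_le_bound _ (norm_nonneg _) fun x => ?_
  obtain ⟨_, ⟨y, rfl⟩, hy⟩ := (hq.map_range_eq_range_of_norm_lt_one hrank h1).ge ⟨x, rfl⟩
  have key := hp.norm_apply_sub_apply_le hq (hq.apply_apply y) (norm_nonneg _)
    (by simpa [hq.apply_apply] using ((1 - p) * q).le_opNorm (q y))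
  rw [show p (q y) = p x from hy] at key
  calc ‖((1 - q) * p) x‖ = ‖p x - q (p x)‖ := by simp
    _ ≤ ‖(1 - p) * q‖ * ‖p x‖ := key
    _ ≤ ‖(1 - p) * q‖ * ‖x‖ := mul_le_mul_of_nonneg_left (hp.norm_apply_le x) (norm_nonneg _)

end IsStarProjection

end StarProjection

lemma norm_sub_sq_le_of_inner_eq_zero {𝕜 E : Type*} [RCLike 𝕜] [NormedAddCommGroup E]
    [InnerProductSpace 𝕜 E] {y z : E} (h : ⟪y, z⟫_𝕜 = 0) {K a b : ℝ} (hy : ‖y‖ ≤ K * (a + b))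
    (hz : ‖z‖ ≤ K * b) : ‖y - z‖ ^ 2 ≤ 4 * K ^ 2 * (a ^ 2 + b ^ 2) := by
  rw [@norm_sub_sq 𝕜, h, map_zero, mul_zero, sub_zero]
  have hy2 := pow_le_pow_left₀ (norm_nonneg _) hy 2
  have hz2 := pow_le_pow_left₀ (norm_nonneg _) hz 2
  nlinarith [sq_nonneg (K * (a - b)), sq_nonneg (K * a)]

section MoorePenrose

variable {𝕜 E F : Type*} [RCLike 𝕜]
  [NormedAddCommGroup E] [InnerProductSpace 𝕜 E] [CompleteSpace E]
  [NormedAddCommGroup F] [InnerProductSpace 𝕜 F] [CompleteSpace F]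

lemma ContinuousLinearMap.finrank_range_adjoint [FiniteDimensional 𝕜 E] [FiniteDimensional 𝕜 F]
    (T : E →L[𝕜] F) :
    finrank 𝕜 (↑(adjoint T) : F →ₗ[𝕜] E).range = finrank 𝕜 (T : E →ₗ[𝕜] F).range := by
  rw [← adjoint_toLinearMap, LinearMap.finrank_range_adjoint]

structure ContinuousLinearMap.IsMoorePenroseInverse (T : E →L[𝕜] F) (T' : F →L[𝕜] E) : Prop where
  comp_inv_comp : T ∘L T' ∘L T = T
  inv_comp_inv : T' ∘L T ∘L T' = T'
  isSelfAdjoint_comp_inv : IsSelfAdjoint (T ∘L T')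
  isSelfAdjoint_inv_comp : IsSelfAdjoint (T' ∘L T)

namespace ContinuousLinearMap.IsMoorePenroseInverse

variable {T S : E →L[𝕜] F} {T' S' : F →L[𝕜] E}

lemma apply_inv_apply (hT : IsMoorePenroseInverse T T') (x : E) : T (T' (T x)) = T x :=
  congr($hT.comp_inv_comp x)

lemma symm (hT : IsMoorePenroseInverse T T') : IsMoorePenroseInverse T' T :=
  ⟨hT.inv_comp_inv, hT.comp_inv_comp, hT.isSelfAdjoint_inv_comp, hT.isSelfAdjoint_comp_inv⟩

lemma adjoint_comp_adjoint (hT : IsMoorePenroseInverse T T') :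
    adjoint T ∘L adjoint T' = T' ∘L T := by
  rw [← adjoint_comp, ← star_eq_adjoint, hT.isSelfAdjoint_inv_comp.star_eq]

lemma adjoint (hT : IsMoorePenroseInverse T T') :
    IsMoorePenroseInverse (adjoint T) (adjoint T') where
  comp_inv_comp := by
    simpa only [adjoint_comp, comp_assoc] using congr(ContinuousLinearMap.adjoint $hT.comp_inv_comp)
  inv_comp_inv := by
    simpa only [adjoint_comp, comp_assoc] using congr(ContinuousLinearMap.adjoint $hT.inv_comp_inv)
  isSelfAdjoint_comp_inv := hT.adjoint_comp_adjoint ▸ hT.isSelfAdjoint_inv_comp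
  isSelfAdjoint_inv_comp := hT.symm.adjoint_comp_adjoint ▸ hT.isSelfAdjoint_comp_inv

lemma isStarProjection_comp_inv (hT : IsMoorePenroseInverse T T') :
    IsStarProjection (T ∘L T') :=
  ⟨by ext x; simp [hT.apply_inv_apply], hT.isSelfAdjoint_comp_inv⟩

lemma range_comp_inv (hT : IsMoorePenroseInverse T T') :
    (↑(T ∘L T') : F →ₗ[𝕜] F).range = (T : E →ₗ[𝕜] F).range := by
  refine le_antisymm (LinearMap.range_comp_le_range _ _) ?_
  rintro _ ⟨x, rfl⟩
  exact ⟨T x, hT.apply_inv_apply x⟩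

lemma norm_one_sub_comp_inv_mul_le (hT : IsMoorePenroseInverse T T') (S : E →L[𝕜] F)
    (S' : F →L[𝕜] E) :
    ‖(1 - T ∘L T') * (S ∘L S')‖ ≤ ‖T - S‖ * ‖S'‖ := by
  have h : (1 - T ∘L T') * (S ∘L S') = (1 - T ∘L T') ∘L (S - T) ∘L S' := by
    ext x; simp [hT.apply_inv_apply]
  calc ‖(1 - T ∘L T') * (S ∘L S')‖ ≤ ‖1 - T ∘L T'‖ * (‖S - T‖ * ‖S'‖) := by
        rw [h]; exact (opNorm_comp_le _ _).trans (by gcongr; exact opNorm_comp_le _ _)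
    _ ≤ ‖T - S‖ * ‖S'‖ := by
        rw [norm_sub_rev S T]
        exact mul_le_of_le_one_left (by positivity)
          (IsStarProjection.norm_le _ hT.isStarProjection_comp_inv.one_sub)

lemma inv_apply_sub_inv_apply (hT : IsMoorePenroseInverse T T') (hS : IsMoorePenroseInverse S S')
    (x : F) : T' x - S' x =
      T' ((T ∘L T' * (1 - S ∘L S')) ((1 - S ∘L S') x) - (T - S) (S' (S (S' x)))) -
        ((1 - T' ∘L T) * (S' ∘L S)) (S' (S (S' x))) := by
  simp [hT.symm.apply_inv_apply, hS.symm.apply_inv_apply]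

lemma norm_one_sub_comp_inv_mul_comp_inv_le [FiniteDimensional 𝕜 F]
    (hT : IsMoorePenroseInverse T T') (hS : IsMoorePenroseInverse S S')
    (hrank : finrank 𝕜 (T : E →ₗ[𝕜] F).range = finrank 𝕜 (S : E →ₗ[𝕜] F).range) :
    ‖(1 - S ∘L S') * (T ∘L T')‖ ≤ ‖T - S‖ * ‖S'‖ := by
  refine (hT.isStarProjection_comp_inv.norm_one_sub_mul_le_of_finrank_range_eq
    hS.isStarProjection_comp_inv ?_).trans (hT.norm_one_sub_comp_inv_mul_le S S')
  rw [hT.range_comp_inv, hS.range_comp_inv, hrank]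

lemma norm_comp_inv_mul_one_sub_le [FiniteDimensional 𝕜 F]
    (hT : IsMoorePenroseInverse T T') (hS : IsMoorePenroseInverse S S')
    (hrank : finrank 𝕜 (T : E →ₗ[𝕜] F).range = finrank 𝕜 (S : E →ₗ[𝕜] F).range) :
    ‖T ∘L T' * (1 - S ∘L S')‖ ≤ ‖T - S‖ * ‖S'‖ := by
  have h := hT.norm_one_sub_comp_inv_mul_comp_inv_le hS hrank
  rwa [← norm_star, star_mul, hT.isSelfAdjoint_comp_inv.star_eq,
    hS.isStarProjection_comp_inv.one_sub.isSelfAdjoint.star_eq] at h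

lemma norm_one_sub_inv_comp_mul_inv_comp_le [FiniteDimensional 𝕜 E] [FiniteDimensional 𝕜 F]
    (hT : IsMoorePenroseInverse T T') (hS : IsMoorePenroseInverse S S')
    (hrank : finrank 𝕜 (T : E →ₗ[𝕜] F).range = finrank 𝕜 (S : E →ₗ[𝕜] F).range) :
    ‖(1 - T' ∘L T) * (S' ∘L S)‖ ≤ ‖T - S‖ * ‖T'‖ := by
  have h := hS.adjoint.norm_one_sub_comp_inv_mul_comp_inv_le hT.adjoint
    (by rw [finrank_range_adjoint, finrank_range_adjoint, hrank])
  rwa [hT.adjoint_comp_adjoint, hS.adjoint_comp_adjoint, ← map_sub,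
    LinearIsometryEquiv.norm_map, LinearIsometryEquiv.norm_map, norm_sub_rev] at h

theorem norm_inv_sub_inv_le [FiniteDimensional 𝕜 E] [FiniteDimensional 𝕜 F]
    (hT : IsMoorePenroseInverse T T') (hS : IsMoorePenroseInverse S S')
    (hrank : finrank 𝕜 (T : E →ₗ[𝕜] F).range = finrank 𝕜 (S : E →ₗ[𝕜] F).range) :
    ‖T' - S'‖ ≤ 2 * ‖T'‖ * ‖S'‖ * ‖T - S‖ := by
  have hPQ := hT.norm_comp_inv_mul_one_sub_le hS hrank
  have hQP := hT.norm_one_sub_inv_comp_mul_inv_comp_le hS hrank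
  refine opNorm_le_bound _ (by positivity) fun x => ?_
  set K := ‖T'‖ * ‖S'‖ * ‖T - S‖
  set a := (1 - S ∘L S') x
  set b := S (S' x)
  set y := T' ((T ∘L T' * (1 - S ∘L S')) a - (T - S) (S' b))
  set z := ((1 - T' ∘L T) * (S' ∘L S)) (S' b)
  have hxy : (T' - S') x = y - z := hT.inv_apply_sub_inv_apply hS x
  have hab : ‖a‖ ^ 2 + ‖b‖ ^ 2 = ‖x‖ ^ 2 := by
    simpa [a, b, add_comm] using (hS.isStarProjection_comp_inv.norm_sq_eq_add_norm_sq_sub x).symm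
  have hyz : ⟪y, z⟫_𝕜 = 0 := by
    have hy : y = (T' ∘L T) y := (hT.symm.apply_inv_apply _).symm
    rw [hy]
    simpa [z] using hT.symm.isStarProjection_comp_inv.inner_apply_sub_apply y ((S' ∘L S) (S' b))
  have hy : ‖y‖ ≤ K * (‖a‖ + ‖b‖) := calc
    ‖y‖ ≤ ‖T'‖ * (‖T ∘L T' * (1 - S ∘L S')‖ * ‖a‖ + ‖T - S‖ * (‖S'‖ * ‖b‖)) := by
      refine (T'.le_opNorm _).trans (mul_le_mul_of_nonneg_left ((norm_sub_le _ _).trans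
        (add_le_add (le_opNorm _ _) ((le_opNorm _ _).trans ?_))) (norm_nonneg _))
      exact mul_le_mul_of_nonneg_left (le_opNorm _ _) (norm_nonneg _)
    _ ≤ ‖T'‖ * (‖T - S‖ * ‖S'‖ * ‖a‖ + ‖T - S‖ * (‖S'‖ * ‖b‖)) := by gcongr
    _ = K * (‖a‖ + ‖b‖) := by ring
  have hz : ‖z‖ ≤ K * ‖b‖ := calc
    ‖z‖ ≤ ‖(1 - T' ∘L T) * (S' ∘L S)‖ * (‖S'‖ * ‖b‖) :=
      (le_opNorm _ _).trans (mul_le_mul_of_nonneg_left (le_opNorm _ _) (norm_nonneg _))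
    _ ≤ ‖T - S‖ * ‖T'‖ * (‖S'‖ * ‖b‖) := by gcongr
    _ = K * ‖b‖ := by ring
  rw [hxy, ← pow_le_pow_iff_left₀ (norm_nonneg _) (by positivity) two_ne_zero]
  calc ‖y - z‖ ^ 2 ≤ 4 * K ^ 2 * (‖a‖ ^ 2 + ‖b‖ ^ 2) := norm_sub_sq_le_of_inner_eq_zero hyz hy hz
    _ = (2 * ‖T'‖ * ‖S'‖ * ‖T - S‖ * ‖x‖) ^ 2 := by rw [hab]; ring

end ContinuousLinearMap.IsMoorePenroseInverse

end MoorePenrose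

namespace Matrix

variable {𝕜 : Type*} [RCLike 𝕜] {m n : Type*} [Fintype m] [Fintype n] [DecidableEq n]

noncomputable def toEuclideanOp (M : Matrix m n 𝕜) : EuclideanSpace 𝕜 n →L[𝕜] EuclideanSpace 𝕜 m :=
  LinearMap.toContinuousLinearMap (toEuclideanLin M)

lemma toEuclideanOp_mul {l : Type*} [Fintype l] [DecidableEq m] (M : Matrix l m 𝕜)
    (N : Matrix m n 𝕜) :
    (M * N).toEuclideanOp = M.toEuclideanOp ∘L N.toEuclideanOp := by
  ext1 x; simp [toEuclideanOp]

lemma toEuclideanOp_sub (M N : Matrix m n 𝕜) :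
    (M - N).toEuclideanOp = M.toEuclideanOp - N.toEuclideanOp := by
  simp [toEuclideanOp]

lemma toEuclideanOp_conjTranspose [DecidableEq m] (M : Matrix m n 𝕜) :
    Mᴴ.toEuclideanOp = adjoint M.toEuclideanOp := by
  rw [toEuclideanOp, toEuclideanLin_conjTranspose_eq_adjoint,
    LinearMap.adjoint_toContinuousLinearMap]
  rfl

lemma rank_eq_finrank_range_toEuclideanOp (M : Matrix m n 𝕜) :
    M.rank = finrank 𝕜 (M.toEuclideanOp : EuclideanSpace 𝕜 n →ₗ[𝕜] EuclideanSpace 𝕜 m).range := by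
  rw [toEuclideanOp, LinearMap.coe_toContinuousLinearMap]
  exact M.rank_eq_finrank_range_toLin (PiLp.basisFun 2 𝕜 m) (PiLp.basisFun 2 𝕜 n)

end Matrix

lemma specNorm_eq_norm_toEuclideanOp {m n : ℕ} (M : Matrix (Fin m) (Fin n) ℝ) :
    specNorm M = ‖M.toEuclideanOp‖ := rfl

lemma IsMPInv.isMoorePenroseInverse {m n : ℕ} {A : Matrix (Fin m) (Fin n) ℝ}
    {A' : Matrix (Fin n) (Fin m) ℝ} (h : IsMPInv A A') :
    A.toEuclideanOp.IsMoorePenroseInverse A'.toEuclideanOp := by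
  obtain ⟨h₁, h₂, h₃, h₄⟩ := h
  refine ⟨?_, ?_, ?_, ?_⟩ <;>
    simp only [← toEuclideanOp_mul, IsSelfAdjoint, star_eq_adjoint, ← toEuclideanOp_conjTranspose,
      conjTranspose_eq_transpose_of_trivial, ← Matrix.mul_assoc, h₁, h₂, h₃, h₄]

theorem stmt10 (m n : ℕ) (A B : Matrix (Fin m) (Fin n) ℝ) (hrank : A.rank = B.rank)
    (Ad Bd : Matrix (Fin n) (Fin m) ℝ) (hAd : IsMPInv A Ad) (hBd : IsMPInv B Bd) :
    specNorm (Ad - Bd) ≤ 2 * specNorm Ad * specNorm Bd * specNorm (A - B) := by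
  rw [A.rank_eq_finrank_range_toEuclideanOp, B.rank_eq_finrank_range_toEuclideanOp] at hrank
  simpa only [specNorm_eq_norm_toEuclideanOp, toEuclideanOp_sub] using
    hAd.isMoorePenroseInverse.norm_inv_sub_inv_le hBd.isMoorePenroseInverse hrank
end

section
/- Let S ∈ ℝ^{m×n} be an α-sparse matrix (each row has at most αn nonzeros, each column at most αm nonzeros), and let I ⊆ [m] be a set of |I| row indices drawn uniformly at random with replacement, with α|I| ≥ (16/3)·log n. Then with probability at least 1 − 1/n, the row submatrix R = S(I,:) has at most 2α|I| nonzero entries in every column (and hence at most αn nonzeros in every row), i.e., R is 2α-sparse. -/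
open Matrix BigOperators MeasureTheory

/-!
Fix a column `j` and let `B` be its support, so `#B ≤ α m`. Weighting each sample
`ι : Fin k → Fin m` by `2 ^ #{t | ι t ∈ B}` and summing gives `(m + #B) ^ k ≤ m ^ k e ^ (α k)`,
so by Markov's inequality at most a fraction `e ^ ((1 - 2 log 2) α k) ≤ e ^ (-3 α k / 8) ≤ n⁻²`
of the samples hit `B` more than `2 α k` times. A union bound over the `n` columns finishes.
-/

open Finset

section
variable {Ω : Type*} [Fintype Ω] (p : Ω → Prop) [DecidablePred p]

lemma sum_two_pow_card_filter (k : ℕ) :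
    ∑ ι : Fin k → Ω, (2 : ℝ) ^ #{t | p (ι t)} = (Fintype.card Ω + #{x | p x}) ^ k := by
  have hsum : ∑ x, (if p x then (2 : ℝ) else 1) = Fintype.card Ω + #{x | p x} := by
    have hsplit := card_filter_add_card_filter_not (s := univ) p
    simp only [Fintype.card, Finset.sum_ite, sum_const, nsmul_eq_mul, ← hsplit]
    push_cast
    ring
  rw [← hsum, Fintype.sum_pow]
  refine sum_congr rfl fun ι _ => ?_
  rw [prod_ite, prod_const_one, mul_one, prod_const]

lemma card_filter_lt_mul_two_rpow_le_sum {β : Type*} [Fintype β] (X : β → ℕ) (a : ℝ) :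
    #{b | a < X b} * (2 : ℝ) ^ a ≤ ∑ b, (2 : ℝ) ^ X b := by
  calc #{b | a < X b} * (2 : ℝ) ^ a ≤ ∑ b ∈ {b | a < X b}, (2 : ℝ) ^ X b := by
        rw [← nsmul_eq_mul]
        refine card_nsmul_le_sum _ _ _ fun b hb => ?_
        rw [← Real.rpow_natCast]
        exact Real.rpow_le_rpow_of_exponent_le one_le_two (mem_filter.1 hb).2.le
    _ ≤ ∑ b, (2 : ℝ) ^ X b :=
        sum_le_sum_of_subset_of_nonneg (subset_univ _) fun _ _ _ => by positivity

lemma card_filter_two_mul_lt_card_filter_le (k : ℕ) {α : ℝ} (hα : 0 ≤ α)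
    (hp : (#{x | p x} : ℝ) ≤ α * Fintype.card Ω) :
    (#{ι : Fin k → Ω | 2 * α * k < #{t | p (ι t)}} : ℝ) ≤
      Fintype.card Ω ^ k * Real.exp (-(3 / 8) * (α * k)) := by
  have hmarkov :=
    card_filter_lt_mul_two_rpow_le_sum (fun ι : Fin k → Ω => #{t | p (ι t)}) (2 * α * k)
  rw [sum_two_pow_card_filter] at hmarkov
  have hmoment : ((Fintype.card Ω : ℝ) + #{x | p x}) ^ k ≤
      Fintype.card Ω ^ k * Real.exp (α * k) :=
    calc ((Fintype.card Ω : ℝ) + #{x | p x}) ^ k ≤ (Fintype.card Ω * Real.exp α) ^ k := by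
          gcongr
          nlinarith [Real.add_one_le_exp α, (Fintype.card Ω).cast_nonneg (α := ℝ)]
      _ = Fintype.card Ω ^ k * Real.exp (α * k) := by
          rw [mul_pow, ← Real.exp_nat_mul, mul_comm α]
  have hexp : Real.exp (α * k) ≤ (2 : ℝ) ^ (2 * α * k) * Real.exp (-(3 / 8) * (α * k)) := by
    rw [Real.rpow_def_of_pos two_pos, ← Real.exp_add, Real.exp_le_exp]
    nlinarith [Real.log_two_gt_d9, mul_nonneg hα k.cast_nonneg]
  refine le_of_mul_le_mul_right ?_ (by positivity : (0 : ℝ) < 2 ^ (2 * α * k))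
  calc _ ≤ _ := hmarkov
    _ ≤ _ := hmoment
    _ ≤ _ := mul_le_mul_of_nonneg_left hexp (by positivity)
    _ = _ := by ring

end

lemma card_filter_exists_le_sum {β ι : Type*} [Fintype β] [Fintype ι] (q : ι → β → Prop)
    [∀ i, DecidablePred (q i)] :
    #{b | ∃ i, q i b} ≤ ∑ i, #{b | q i b} := by
  classical
  have hunion : ({b | ∃ i, q i b} : Finset β) = univ.biUnion fun i => {b | q i b} := by
    ext b; simp
  rw [hunion]
  exact card_biUnion_le

lemma ofReal_one_sub_le_uniformOfFintype_toMeasure {β : Type*} [Fintype β] [Nonempty β]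
    [MeasurableSpace β] [MeasurableSingletonClass β] (s : Set β) [DecidablePred (· ∈ s)]
    {r : ℝ} (hr : 0 ≤ r) (h : (#{x | x ∉ s} : ℝ) ≤ r * Fintype.card β) :
    ENNReal.ofReal (1 - r) ≤ (PMF.uniformOfFintype β).toMeasure s := by
  have hs : MeasurableSet s := (Set.toFinite s).measurableSet
  have hcompl : (PMF.uniformOfFintype β).toMeasure sᶜ ≤ ENNReal.ofReal r := by
    rw [PMF.toMeasure_uniformOfFintype_apply _ hs.compl]
    refine ENNReal.div_le_of_le_mul ?_
    rw [← ENNReal.ofReal_natCast, ← ENNReal.ofReal_natCast, ← ENNReal.ofReal_mul hr]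
    refine ENNReal.ofReal_le_ofReal ?_
    simpa [Fintype.card_subtype] using h
  calc ENNReal.ofReal (1 - r) = 1 - ENNReal.ofReal r := by
        rw [ENNReal.ofReal_sub 1 hr, ENNReal.ofReal_one]
    _ ≤ 1 - (PMF.uniformOfFintype β).toMeasure sᶜ := tsub_le_tsub_left hcompl 1
    _ = (PMF.uniformOfFintype β).toMeasure s := by
      rw [prob_compl_eq_one_sub hs, ENNReal.sub_sub_cancel ENNReal.one_ne_top prob_le_one]

lemma natCast_mul_exp_neg_le_one_div {n : ℕ} (hn : 0 < n) {x : ℝ}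
    (hx : (16 / 3) * Real.log n ≤ x) :
    n * Real.exp (-(3 / 8) * x) ≤ 1 / n := by
  have hn' : (0 : ℝ) < n := by exact_mod_cast hn
  calc n * Real.exp (-(3 / 8) * x) ≤ n * Real.exp (-(2 * Real.log n)) := by
        gcongr; linarith
    _ = 1 / n := by
      rw [Real.exp_neg, two_mul, Real.exp_add, Real.exp_log hn']; field_simp

theorem stmt12_general (m n k : ℕ) (hm : 0 < m) (hn : 0 < n) (α : ℝ)
    (S : Matrix (Fin m) (Fin n) ℝ)
    (hcol : ∀ j, ((Finset.univ.filter (fun i => S i j ≠ 0)).card : ℝ) ≤ α * m)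
    (hαk : (16 / 3) * Real.log n ≤ α * k) :
    ENNReal.ofReal (1 - 1 / n) ≤
      (@PMF.uniformOfFintype (Fin k → Fin m) _ ⟨fun _ => ⟨0, hm⟩⟩).toMeasure
        {ι | ∀ j : Fin n,
          ((Finset.univ.filter (fun t : Fin k => S (ι t) j ≠ 0)).card : ℝ) ≤ 2 * α * k} := by
  classical
  have : Nonempty (Fin m) := ⟨⟨0, hm⟩⟩
  have hα : 0 ≤ α := by
    have hm' : (0 : ℝ) < m := by exact_mod_cast hm
    have := (Nat.cast_nonneg _).trans (hcol ⟨0, hn⟩)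
    exact nonneg_of_mul_nonneg_left this hm'
  refine ofReal_one_sub_le_uniformOfFintype_toMeasure _ (by positivity) ?_
  calc _ ≤ ∑ j : Fin n, (#{ι : Fin k → Fin m | 2 * α * k < #{t | S (ι t) j ≠ 0}} : ℝ) := by
        have := card_filter_exists_le_sum fun (j : Fin n) (ι : Fin k → Fin m) =>
          2 * α * k < (#{t | S (ι t) j ≠ 0} : ℝ)
        simp only [Set.mem_ofPred_eq, not_forall, not_le]
        exact_mod_cast this
    _ ≤ ∑ _j : Fin n, (m : ℝ) ^ k * Real.exp (-(3 / 8) * (α * k)) := by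
        refine sum_le_sum fun j _ => ?_
        simpa using card_filter_two_mul_lt_card_filter_le (fun i => S i j ≠ 0) k hα
          (by simpa using hcol j)
    _ = m ^ k * (n * Real.exp (-(3 / 8) * (α * k))) := by
        simp only [sum_const, card_univ, Fintype.card_fin, nsmul_eq_mul]; ring
    _ ≤ m ^ k * (1 / n) := by gcongr; exact natCast_mul_exp_neg_le_one_div hn hαk
    _ = 1 / n * Fintype.card (Fin k → Fin m) := by
        simp only [Fintype.card_pi, Fintype.card_fin, prod_const, card_univ, Nat.cast_pow]; ring

theorem stmt12 (m n k : ℕ) (hm : 0 < m) (hn : 0 < n) (hk : 0 < k) (α : ℝ)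
    (S : Matrix (Fin m) (Fin n) ℝ)
    (hrow : ∀ i, ((Finset.univ.filter (fun j => S i j ≠ 0)).card : ℝ) ≤ α * n)
    (hcol : ∀ j, ((Finset.univ.filter (fun i => S i j ≠ 0)).card : ℝ) ≤ α * m)
    (hαk : (16 / 3) * Real.log n ≤ α * k) :
    ENNReal.ofReal (1 - 1 / n) ≤
      (@PMF.uniformOfFintype (Fin k → Fin m) _ ⟨fun _ => ⟨0, hm⟩⟩).toMeasure
        {ι | ∀ j : Fin n,
          ((Finset.univ.filter (fun t : Fin k => S (ι t) j ≠ 0)).card : ℝ) ≤ 2 * α * k} :=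
  stmt12_general m n k hm hn α S hcol hαk
end

section
/- Let L ∈ ℝ^{m×n} have rank r with compact SVD L = W Σ Vᵀ. For I ⊆ [m] and J ⊆ [n] such that W(I,:) and V(J,:) each have rank r, set C = L(:,J), R = L(I,:), U = L(I,J). Then the CUR decomposition is exact: L = C U† R. -/
open Matrix BigOperators MeasureTheory

lemma cancelLeftAux15 {k r p : ℕ} (A : Matrix (Fin k) (Fin r) ℝ) (hA : A.rank = r)
    (X Y : Matrix (Fin r) (Fin p) ℝ) (h : A * X = A * Y) : X = Y := by
  have hinj : Function.Injective A.mulVecLin := by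
    rw [← LinearMap.ker_eq_bot]
    have hrn := A.mulVecLin.finrank_range_add_finrank_ker
    rw [Matrix.rank] at hA
    simp [hA] at hrn
    exact hrn
  ext i j
  have hcol : A *ᵥ (fun a => X a j) = A *ᵥ (fun a => Y a j) := by
    funext i'
    have := congrFun (congrFun h i') j
    simpa [Matrix.mul_apply, Matrix.mulVec, dotProduct] using this
  have := congrFun (hinj hcol) i
  simpa using this

lemma cancelRightAux15 {k r p : ℕ} (B : Matrix (Fin k) (Fin r) ℝ) (hB : B.rank = r)
    (X Y : Matrix (Fin p) (Fin r) ℝ) (h : X * Bᵀ = Y * Bᵀ) : X = Y := by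
  have h' : B * Xᵀ = B * Yᵀ := by
    have := congrArg Matrix.transpose h
    simpa [Matrix.transpose_mul] using this
  have := cancelLeftAux15 B hB Xᵀ Yᵀ h'
  simpa using congrArg Matrix.transpose this

theorem stmt15 (m n r kI kJ : ℕ)
    (L : Matrix (Fin m) (Fin n) ℝ)
    (W : Matrix (Fin m) (Fin r) ℝ) (σ : Fin r → ℝ) (V : Matrix (Fin n) (Fin r) ℝ)
    (hW : Wᵀ * W = 1) (hV : Vᵀ * V = 1) (hσ : ∀ i, 0 < σ i)
    (hL : L = W * Matrix.diagonal σ * Vᵀ)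
    (hrank : L.rank = r)
    (f : Fin kI → Fin m) (hf : Function.Injective f)
    (g : Fin kJ → Fin n) (hg : Function.Injective g)
    (hWI : (W.submatrix f id).rank = r)
    (hVJ : (V.submatrix g id).rank = r)
    (C : Matrix (Fin m) (Fin kJ) ℝ) (hC : C = L.submatrix id g)
    (R : Matrix (Fin kI) (Fin n) ℝ) (hR : R = L.submatrix f id)
    (U : Matrix (Fin kI) (Fin kJ) ℝ) (hU : U = L.submatrix f g) :
    ∀ Ud : Matrix (Fin kJ) (Fin kI) ℝ, IsMPInv U Ud → L = C * Ud * R := by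
  intro Ud hMP
  obtain ⟨h1, -, -, -⟩ := hMP
  set A := W.submatrix f id with hA
  set B := V.submatrix g id with hBdef
  set D := Matrix.diagonal σ with hD
  have hU' : U = A * D * Bᵀ := by
    subst hU hL
    ext i j
    simp [hA, hBdef, Matrix.mul_apply, Matrix.submatrix_apply]
  have hC' : C = W * D * Bᵀ := by
    subst hC hL
    ext i j
    simp [hA, hBdef, Matrix.mul_apply, Matrix.submatrix_apply]
  have hR' : R = A * D * Vᵀ := by
    subst hR hL
    ext i j
    simp [hA, hBdef, Matrix.mul_apply, Matrix.submatrix_apply]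
  rw [hU'] at h1
  have h2 : A * (D * Bᵀ * Ud * (A * D) * Bᵀ) = A * (D * Bᵀ) := by
    calc A * (D * Bᵀ * Ud * (A * D) * Bᵀ) = A * D * Bᵀ * Ud * (A * D * Bᵀ) := by
          simp only [Matrix.mul_assoc]
      _ = A * D * Bᵀ := h1
      _ = A * (D * Bᵀ) := by simp only [Matrix.mul_assoc]
  have h3 := cancelLeftAux15 A hWI _ _ h2
  have h4 := cancelRightAux15 B hVJ _ _ h3
  calc L = W * D * Vᵀ := hL
    _ = W * (D * Bᵀ * Ud * (A * D)) * Vᵀ := by rw [h4]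
    _ = (W * D * Bᵀ) * Ud * (A * D * Vᵀ) := by simp only [Matrix.mul_assoc]
    _ = C * Ud * R := by rw [hC', hR']
end
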